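/- Let {A_i}_{i=1}^p be non-empty closed subsets of a complete G-metric space (X,G) and let T : ⋃_{i=1}^p A_i → ⋃_{i=1}^p A_i be a G-cyclic (φ-ψ)-Chatterjea type contraction, i.e. a cyclical operator for which there exist an altering distance function φ, a function ψ as below, and constants α, β with 0 ≤ α ≤ 1/2 and 0 < α + β ≤ 1 such that for every i ∈ {1,…,p}, every x ∈ A_i and all y, z ∈ A_{i+1}, φ(G(Tx,Ty,Tz)) ≤ φ(α·G(x,Ty,Tz) + β·G(y,z,Tx)) − ψ(G(x,Ty,Tz), G(y,z,Tx), G(z,y,Tx)). Then T has a unique fixed point u, and u ∈ ⋂_{i=1}^p A_i. -/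

import Mathlib

/-- A sequence `s` in `X` `G`-converges to `x`: `lim_{n,m→∞} G(x, s n, s m) = 0`. -/
def GConvergesTo {X : Type*} (G : X → X → X → ℝ) (s : ℕ → X) (x : X) : Prop :=
  ∀ ε > 0, ∃ N : ℕ, ∀ n ≥ N, ∀ m ≥ N, G x (s n) (s m) < ε

/-- A sequence `s` in `X` is `G`-Cauchy: `lim_{n,m,ℓ→∞} G(s n, s m, s ℓ) = 0`. -/
def GCauchySeq {X : Type*} (G : X → X → X → ℝ) (s : ℕ → X) : Prop :=
  ∀ ε > 0, ∃ N : ℕ, ∀ n ≥ N, ∀ m ≥ N, ∀ l ≥ N, G (s n) (s m) (s l) < ε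

/-- `(X, G)` is a complete `G`-metric space: every `G`-Cauchy sequence `G`-converges. -/
def GComplete {X : Type*} (G : X → X → X → ℝ) : Prop :=
  ∀ s : ℕ → X, GCauchySeq G s → ∃ x : X, GConvergesTo G s x

/-- A subset `A` is closed: the `G`-limit of every `G`-convergent sequence of points
of `A` belongs to `A`. -/
def GClosed {X : Type*} (G : X → X → X → ℝ) (A : Set X) : Prop :=
  ∀ s : ℕ → X, (∀ n, s n ∈ A) → ∀ x : X, GConvergesTo G s x → x ∈ A

/-- `G : X × X × X → [0,∞)` is a generalized metric ("G-metric") on `X`. -/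
structure IsGMetric {X : Type*} (G : X → X → X → ℝ) : Prop where
  nonneg : ∀ x y z, 0 ≤ G x y z
  eq_zero : ∀ x, G x x x = 0
  pos_of_ne : ∀ x y, x ≠ y → 0 < G x x y
  le_of_ne : ∀ x y z, y ≠ z → G x x y ≤ G x y z
  symm_right : ∀ x y z, G x y z = G x z y
  symm_left : ∀ x y z, G x y z = G y x z
  rectangle : ∀ x y z a, G x y z ≤ G x a a + G a y z

/-- An altering distance function `φ : [0,∞) → [0,∞)`: continuous, nondecreasing,
and vanishing exactly at `0`. -/
structure IsAlteringDistance (φ : ℝ → ℝ) : Prop where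
  nonneg : ∀ t, 0 ≤ t → 0 ≤ φ t
  continuous : ContinuousOn φ (Set.Ici 0)
  mono : MonotoneOn φ (Set.Ici 0)
  eq_zero_iff : ∀ t, 0 ≤ t → (φ t = 0 ↔ t = 0)

/-- `ψ : [0,∞)³ → [0,∞)` continuous with `ψ(x,y,z) = 0 ↔ x = y = z = 0`. -/
structure IsPsiFun (ψ : ℝ → ℝ → ℝ → ℝ) : Prop where
  nonneg : ∀ x y z, 0 ≤ x → 0 ≤ y → 0 ≤ z → 0 ≤ ψ x y z
  continuous : ContinuousOn (fun q : ℝ × ℝ × ℝ => ψ q.1 q.2.1 q.2.2)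
    (Set.Ici 0 ×ˢ Set.Ici 0 ×ˢ Set.Ici 0)
  eq_zero_iff : ∀ x y z, 0 ≤ x → 0 ≤ y → 0 ≤ z →
    (ψ x y z = 0 ↔ x = 0 ∧ y = 0 ∧ z = 0)

open Filter Topology

section Aux
variable {X : Type*} {G : X → X → X → ℝ}

lemma gcycle (hG : IsGMetric G) (a b c : X) : G a b c = G b c a := by
  rw [hG.symm_left, hG.symm_right]

lemma gd_rev (hG : IsGMetric G) (a b : X) : G a a b = G b a a :=
  (gcycle hG a a b).trans (gcycle hG a b a)

lemma gd_tri (hG : IsGMetric G) (a b c : X) : G a b b ≤ G a c c + G c b b :=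
  hG.rectangle a b b c

lemma gd_swap (hG : IsGMetric G) (a b : X) : G a b b ≤ 2 * G b a a := by
  have h1 : G a b b = G b b a := gcycle hG a b b
  have h2 := hG.rectangle b b a a
  have h3 : G a b a = G b a a := gcycle hG a b a
  linarith

lemma gd_eq (hG : IsGMetric G) {a b : X} (h : G a b b = 0) : a = b := by
  by_contra hne
  have h2 := hG.pos_of_ne b a (Ne.symm hne)
  have h3 : G b b a = G a b b := (gcycle hG b b a).trans (gcycle hG b a b)
  linarith

lemma phi_zero {φ : ℝ → ℝ} (hφ : IsAlteringDistance φ) : φ 0 = 0 :=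
  (hφ.eq_zero_iff 0 le_rfl).mpr rfl

lemma phi_pos {φ : ℝ → ℝ} (hφ : IsAlteringDistance φ) {t : ℝ} (h : 0 < t) : 0 < φ t := by
  rcases lt_or_eq_of_le (hφ.nonneg t h.le) with h' | h'
  · exact h'
  · exact absurd ((hφ.eq_zero_iff t h.le).mp h'.symm) h.ne'

lemma psi_zero {ψ : ℝ → ℝ → ℝ → ℝ} (hψ : IsPsiFun ψ) : ψ 0 0 0 = 0 :=
  (hψ.eq_zero_iff 0 0 0 le_rfl le_rfl le_rfl).mpr ⟨rfl, rfl, rfl⟩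

lemma phi_tendsto {φ : ℝ → ℝ} (hφ : IsAlteringDistance φ) {a : ℕ → ℝ} {t : ℝ} (ht : 0 ≤ t)
    (ha : Tendsto a atTop (nhds t)) (h0 : ∀ᶠ n in atTop, 0 ≤ a n) :
    Tendsto (fun n => φ (a n)) atTop (nhds (φ t)) := by
  exact (hφ.continuous t ht).tendsto.comp
    (tendsto_nhdsWithin_iff.mpr ⟨ha, by simpa using h0⟩)

lemma psi_tendsto {ψ : ℝ → ℝ → ℝ → ℝ} (hψ : IsPsiFun ψ) {a b c : ℕ → ℝ} {ta tb tc : ℝ}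
    (hta : 0 ≤ ta) (htb : 0 ≤ tb) (htc : 0 ≤ tc)
    (ha : Tendsto a atTop (nhds ta)) (hb : Tendsto b atTop (nhds tb))
    (hc : Tendsto c atTop (nhds tc))
    (h0a : ∀ n, 0 ≤ a n) (h0b : ∀ n, 0 ≤ b n) (h0c : ∀ n, 0 ≤ c n) :
    Tendsto (fun n => ψ (a n) (b n) (c n)) atTop (nhds (ψ ta tb tc)) := by
  have hmem : ((ta, tb, tc) : ℝ × ℝ × ℝ) ∈ Set.Ici (0:ℝ) ×ˢ Set.Ici (0:ℝ) ×ˢ Set.Ici (0:ℝ) :=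
    ⟨hta, htb, htc⟩
  have htrip : Tendsto (fun n => ((a n, b n, c n) : ℝ × ℝ × ℝ)) atTop
      (nhdsWithin (ta, tb, tc) (Set.Ici (0:ℝ) ×ˢ Set.Ici (0:ℝ) ×ˢ Set.Ici (0:ℝ))) := by
    refine tendsto_nhdsWithin_iff.mpr ⟨?_, Filter.Eventually.of_forall fun n => ⟨h0a n, h0b n, h0c n⟩⟩
    exact ha.prodMk_nhds (hb.prodMk_nhds hc)
  exact (hψ.continuous (ta, tb, tc) hmem).tendsto.comp htrip

lemma tendsto_zero_iff {f : ℕ → ℝ} (hnn : ∀ n, 0 ≤ f n) :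
    Tendsto f atTop (nhds 0) ↔ ∀ δ > 0, ∃ N, ∀ n ≥ N, f n < δ := by
  rw [Metric.tendsto_atTop]
  constructor
  · intro h δ hδ
    obtain ⟨N, hN⟩ := h δ hδ
    exact ⟨N, fun n hn => by
      have := hN n hn; rwa [Real.dist_eq, sub_zero, abs_of_nonneg (hnn n)] at this⟩
  · intro h δ hδ
    obtain ⟨N, hN⟩ := h δ hδ
    exact ⟨N, fun n hn => by
      rw [Real.dist_eq, sub_zero, abs_of_nonneg (hnn n)]; exact hN n hn⟩

end Aux

open Fin.CommRing in
set_option maxHeartbeats 4000000 in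
theorem stmt_3 {X : Type*} (G : X → X → X → ℝ) (hG : IsGMetric G)
    (hcompl : GComplete G)
    (p : ℕ) [NeZero p] (A : Fin p → Set X)
    (hne : ∀ i, (A i).Nonempty) (hcl : ∀ i, GClosed G (A i))
    (T : X → X) (hcyc : ∀ i : Fin p, ∀ x ∈ A i, T x ∈ A (i + 1))
    (φ : ℝ → ℝ) (ψ : ℝ → ℝ → ℝ → ℝ)
    (hφ : IsAlteringDistance φ) (hψ : IsPsiFun ψ)
    (α β : ℝ) (hα0 : 0 ≤ α) (hα1 : α ≤ 1 / 2)
    (hαβ0 : 0 < α + β) (hαβ1 : α + β ≤ 1)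
    (hcontr : ∀ i : Fin p, ∀ x ∈ A i, ∀ y ∈ A (i + 1), ∀ z ∈ A (i + 1),
      φ (G (T x) (T y) (T z)) ≤
        φ (α * G x (T y) (T z) + β * G y z (T x)) -
          ψ (G x (T y) (T z)) (G y z (T x)) (G z y (T x))) :
    ∃ u ∈ ⋂ i, A i, T u = u ∧ ∀ v ∈ ⋃ i, A i, T v = v → v = u := by
  classical
  have hp : 0 < p := Nat.pos_of_ne_zero (NeZero.ne p)
  have castsucc : ∀ n : ℕ, ((n+1 : ℕ) : Fin p) = (n : Fin p) + 1 := by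
    intro n; push_cast; ring
  have castmod : ∀ m n : ℕ, m % p = n % p → (m : Fin p) = (n : Fin p) := by
    intro m n h; apply Fin.ext; rw [Fin.val_natCast m p, Fin.val_natCast n p, h]
  have fixmem : ∀ w : X, ∀ i : Fin p, T w = w → w ∈ A i → w ∈ ⋂ j, A j := by
    intro w i hw hwA
    have hiter : ∀ k : ℕ, w ∈ A (i + (k : Fin p)) := by
      intro k
      induction k with
      | zero => simpa using hwA
      | succ k ih =>
        have h2 := hcyc (i + (k : Fin p)) w ih
        rw [hw] at h2
        have : i + ((k+1 : ℕ) : Fin p) = i + (k : Fin p) + 1 := by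
          rw [castsucc k]; ring
        rw [this]; exact h2
    rw [Set.mem_iInter]
    intro j
    have := hiter (j - i).val
    rwa [Fin.cast_val_eq_self (j - i), add_sub_cancel] at this
  have keyexists : ∃ u, T u = u ∧ u ∈ ⋂ j, A j := by
    obtain ⟨x0, hx0⟩ := hne 0
    set x : ℕ → X := fun n => T^[n] x0 with hxdef
    have hxs : ∀ n, x (n+1) = T (x n) := by
      intro n; simp only [hxdef]; exact Function.iterate_succ_apply' T n x0
    have hmem : ∀ n : ℕ, x n ∈ A (n : Fin p) := by
      intro n
      induction n with
      | zero => simpa [hxdef] using hx0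
      | succ n ih =>
        rw [hxs n, castsucc n]
        exact hcyc _ _ ih
    have hA1 : ∀ n m : ℕ, m % p = (n+1) % p → x m ∈ A ((n : Fin p) + 1) := by
      intro n m h
      have h2 : (m : Fin p) = (n : Fin p) + 1 := by rw [castmod m (n+1) h, castsucc n]
      rw [← h2]; exact hmem m
    have key : ∀ n m : ℕ, m % p = (n+1) % p →
        φ (G (x (n+1)) (x (m+1)) (x (m+1))) ≤
          φ (α * G (x n) (x (m+1)) (x (m+1)) + β * G (x m) (x m) (x (n+1))) -
            ψ (G (x n) (x (m+1)) (x (m+1))) (G (x m) (x m) (x (n+1)))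
              (G (x m) (x m) (x (n+1))) := by
      intro n m h
      have h1 := hcontr (n : Fin p) (x n) (hmem n) (x m) (hA1 n m h) (x m) (hA1 n m h)
      rw [← hxs n, ← hxs m] at h1
      exact h1
    set d : ℕ → ℝ := fun n => G (x n) (x (n+1)) (x (n+1)) with hd
    set e : ℕ → ℝ := fun n => G (x n) (x (n+2)) (x (n+2)) with he
    have hd0 : ∀ n, 0 ≤ d n := fun n => hG.nonneg _ _ _
    have he0 : ∀ n, 0 ≤ e n := fun n => hG.nonneg _ _ _
    have he_le : ∀ n, e n ≤ d n + d (n+1) := by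
      intro n
      have h1 := gd_tri hG (x n) (x (n+2)) (x (n+1))
      have h2 : G (x (n+1)) (x (n+2)) (x (n+2)) = d (n+1) := rfl
      have h3 : G (x n) (x (n+1)) (x (n+1)) = d n := rfl
      have h4 : G (x n) (x (n+2)) (x (n+2)) = e n := rfl
      linarith
    have keyd : ∀ n, φ (d (n+1)) ≤ φ (α * e n) - ψ (e n) 0 0 := by
      intro n
      have h1 := key n (n+1) rfl
      rw [hG.eq_zero (x (n+1)), mul_zero, add_zero] at h1
      exact h1
    by_cases hfix : ∃ n, T (x n) = x n
    · obtain ⟨n, hn⟩ := hfix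
      exact ⟨x n, hn, fixmem (x n) (n : Fin p) hn (hmem n)⟩
    push_neg at hfix
    have hnex : ∀ n, x (n+1) ≠ x n := by intro n; rw [hxs n]; exact hfix n
    have period2 : ∀ n, x (n+2) ≠ x n := by
      intro n h2
      have h1 := keyd n
      have he' : e n = 0 := by
        have : e n = G (x n) (x (n+2)) (x (n+2)) := rfl
        rw [this, h2]; exact hG.eq_zero (x n)
      rw [he', mul_zero, phi_zero hφ, psi_zero hψ] at h1
      have hd1 : d (n+1) = 0 :=
        (hφ.eq_zero_iff _ (hd0 (n+1))).mp
          (le_antisymm (by linarith) (hφ.nonneg _ (hd0 (n+1))))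
      have h3 : x (n+1) = x (n+2) := gd_eq hG hd1
      exact hnex n (h3.trans h2)
    have hdanti : ∀ n, d (n+1) ≤ d n := by
      intro n
      by_contra hlt
      push_neg at hlt
      have hαe : α * e n ≤ d (n+1) := by nlinarith [he_le n, he0 n, hd0 n, hd0 (n+1)]
      have hmono : φ (α * e n) ≤ φ (d (n+1)) :=
        hφ.mono (Set.mem_Ici.mpr (mul_nonneg hα0 (he0 n))) (Set.mem_Ici.mpr (hd0 (n+1))) hαe
      have h1 := keyd n
      have hψnn := hψ.nonneg (e n) 0 0 (he0 n) le_rfl le_rfl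
      have hψz : ψ (e n) 0 0 = 0 := le_antisymm (by linarith) hψnn
      have he' : e n = 0 := ((hψ.eq_zero_iff (e n) 0 0 (he0 n) le_rfl le_rfl).mp hψz).1
      exact period2 n (gd_eq hG (show G (x n) (x (n+2)) (x (n+2)) = 0 from he')).symm
    have hanti : ∀ {i j : ℕ}, i ≤ j → d j ≤ d i :=
      fun {i j} hij => antitone_nat_of_succ_le hdanti hij
    have hteles : ∀ n, ψ (e n) 0 0 ≤ φ (d n) - φ (d (n+1)) := by
      intro n
      have hαe : α * e n ≤ d n := by
        nlinarith [he_le n, he0 n, hd0 n, hd0 (n+1), hdanti n]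
      have hmono : φ (α * e n) ≤ φ (d n) :=
        hφ.mono (Set.mem_Ici.mpr (mul_nonneg hα0 (he0 n))) (Set.mem_Ici.mpr (hd0 n)) hαe
      have h1 := keyd n
      linarith
    have hψtend : Tendsto (fun n => ψ (e n) 0 0) atTop (nhds 0) := by
      refine Summable.tendsto_atTop_zero ?_
      apply summable_of_sum_range_le (c := φ (d 0))
        (fun n => hψ.nonneg (e n) 0 0 (he0 n) le_rfl le_rfl)
      intro n
      calc ∑ i ∈ Finset.range n, ψ (e i) 0 0
          ≤ ∑ i ∈ Finset.range n, (φ (d i) - φ (d (i+1))) :=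
            Finset.sum_le_sum (fun i _ => hteles i)
        _ = φ (d 0) - φ (d n) := Finset.sum_range_sub' (fun i => φ (d i)) n
        _ ≤ φ (d 0) := by linarith [hφ.nonneg (d n) (hd0 n)]
    have hetend : Tendsto e atTop (nhds 0) := by
      rw [tendsto_zero_iff he0]
      intro δ hδ
      by_cases hM : 2 * d 0 < δ
      · refine ⟨0, fun n _ => lt_of_le_of_lt ?_ hM⟩
        have := he_le n
        have h2 := hanti (Nat.zero_le n)
        have h3 := hanti (Nat.zero_le (n+1))
        linarith
      push_neg at hM
      have hcont : ContinuousOn (fun t : ℝ => ψ t 0 0) (Set.Icc δ (2 * d 0)) := by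
        have hmap : Set.MapsTo (fun t : ℝ => ((t, 0, 0) : ℝ × ℝ × ℝ)) (Set.Icc δ (2 * d 0))
            (Set.Ici (0:ℝ) ×ˢ Set.Ici (0:ℝ) ×ˢ Set.Ici (0:ℝ)) := by
          intro t ht
          simp only [Set.mem_prod, Set.mem_Ici]
          exact ⟨le_trans hδ.le ht.1, le_rfl, le_rfl⟩
        exact hψ.continuous.comp (Continuous.continuousOn (by continuity)) hmap
      obtain ⟨t0, ht0K, hmin⟩ := isCompact_Icc.exists_isMinOn ⟨δ, le_rfl, hM⟩ hcont
      have hη : 0 < ψ t0 0 0 := by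
        have h1 := hψ.nonneg t0 0 0 (le_trans hδ.le ht0K.1) le_rfl le_rfl
        rcases lt_or_eq_of_le h1 with h | h
        · exact h
        · exfalso
          have := ((hψ.eq_zero_iff t0 0 0 (le_trans hδ.le ht0K.1) le_rfl le_rfl).mp h.symm).1
          linarith [ht0K.1]
      obtain ⟨N, hN⟩ := (tendsto_zero_iff
        (fun n => hψ.nonneg (e n) 0 0 (he0 n) le_rfl le_rfl)).mp hψtend (ψ t0 0 0) hη
      refine ⟨N, fun n hn => ?_⟩
      by_contra hge
      push_neg at hge
      have heK : e n ∈ Set.Icc δ (2 * d 0) := by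
        refine ⟨hge, ?_⟩
        have := he_le n
        have h2 := hanti (Nat.zero_le n)
        have h3 := hanti (Nat.zero_le (n+1))
        linarith
      have h7 : ψ t0 0 0 ≤ ψ (e n) 0 0 := hmin heK
      have h5 := hN n hn
      linarith
    have hdtend : Tendsto d atTop (nhds 0) := by
      rw [tendsto_zero_iff hd0]
      intro δ hδ
      have hαetend : Tendsto (fun n => α * e n) atTop (nhds 0) := by
        simpa using hetend.const_mul α
      have hφtend : Tendsto (fun n => φ (α * e n)) atTop (nhds 0) := by
        have := phi_tendsto hφ le_rfl hαetend
          (Filter.Eventually.of_forall fun n => mul_nonneg hα0 (he0 n))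
        rwa [phi_zero hφ] at this
      obtain ⟨N, hN⟩ := (tendsto_zero_iff
        (fun n => hφ.nonneg _ (mul_nonneg hα0 (he0 n)))).mp hφtend (φ δ) (phi_pos hφ hδ)
      refine ⟨N + 1, fun n hn => ?_⟩
      obtain ⟨m, rfl⟩ : ∃ m, n = m + 1 := ⟨n - 1, by omega⟩
      by_contra hge
      push_neg at hge
      have h1 := keyd m
      have hmono : φ δ ≤ φ (d (m+1)) :=
        hφ.mono (Set.mem_Ici.mpr hδ.le) (Set.mem_Ici.mpr (hd0 (m+1))) hge
      have hψnn := hψ.nonneg (e m) 0 0 (he0 m) le_rfl le_rfl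
      have h6 := hN m (by omega)
      linarith
    have chain : ∀ a k : ℕ, G (x a) (x (a + k)) (x (a + k)) ≤ (k : ℝ) * d a := by
      intro a k
      induction k with
      | zero => simp [hG.eq_zero]
      | succ k ih =>
        have heq : a + (k+1) = (a+k)+1 := by omega
        rw [heq]
        have h1 := gd_tri hG (x a) (x ((a+k)+1)) (x (a+k))
        have h2 : G (x (a+k)) (x ((a+k)+1)) (x ((a+k)+1)) = d (a+k) := rfl
        have h3 : d (a + k) ≤ d a := hanti (Nat.le_add_right a k)
        push_cast
        nlinarith
    have mod_adjust : ∀ m n : ℕ, ∃ k, k < p ∧ (m + k) % p = n % p := by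
      intro m n
      refine ⟨(n + p - m % p) % p, Nat.mod_lt _ hp, ?_⟩
      have h4 : m + (n + p - m % p) = n + p + p * (m / p) := by
        have h5 := Nat.mod_add_div m p
        have h6 := Nat.mod_lt m hp
        omega
      calc (m + (n + p - m % p) % p) % p
          = (m + (n + p - m % p)) % p := Nat.add_mod_mod _ _ _
        _ = (n + p + p * (m / p)) % p := by rw [h4]
        _ = (n + p) % p := Nat.add_mul_mod_self_left _ _ _
        _ = n % p := Nat.add_mod_right _ _
    have pcauchy : ∀ ε > 0, ∃ N, ∀ n ≥ N, ∀ m ≥ N, G (x n) (x m) (x m) < ε := by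
      by_contra hnc
      push_neg at hnc
      obtain ⟨ε, hε, H⟩ := hnc
      have step1 : ∀ N, ∃ n, N ≤ n ∧ ∃ m, n < m ∧ ε/2 ≤ G (x n) (x m) (x m) := by
        intro N
        obtain ⟨n, hn, m, hm, hd'⟩ := H N
        rcases lt_trichotomy n m with h | h | h
        · exact ⟨n, hn, m, h, by linarith⟩
        · exfalso; rw [h, hG.eq_zero] at hd'; linarith
        · refine ⟨m, hm, n, h, ?_⟩
          have := gd_swap hG (x n) (x m)
          linarith
      have hq0 : (0:ℝ) < 2*(p:ℝ)+1 := by positivity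
      obtain ⟨N1, hN1⟩ := (tendsto_zero_iff hd0).mp hdtend ((ε/4)/(2*(p:ℝ)+1)) (by positivity)
      have hdsmall : ∀ n, N1 ≤ n → 2*(p:ℝ)*d n < ε/4 ∧ d n < ε/4 := by
        intro n hn
        have h1 := hN1 n hn
        have h2 : (2*(p:ℝ)+1) * d n < (2*(p:ℝ)+1) * ((ε/4)/(2*(p:ℝ)+1)) :=
          mul_lt_mul_of_pos_left h1 hq0
        rw [mul_div_cancel₀ _ (ne_of_gt hq0)] at h2
        have h3 := hd0 n
        have hpd : (0:ℝ) ≤ 2*(p:ℝ)*d n :=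
          mul_nonneg (mul_nonneg (by norm_num) (Nat.cast_nonneg p)) (hd0 n)
        exact ⟨by linarith, by linarith⟩
      have step2 : ∀ K : ℕ, ∃ n m : ℕ, K ≤ n ∧ n < m ∧
          ε/4 ≤ G (x n) (x m) (x m) ∧ G (x n) (x m) (x m) ≤ ε/4 + (p:ℝ) * d n ∧
          m % p = (n+1) % p := by
        intro K
        obtain ⟨n, hnN, m, hnm, hδnm⟩ := step1 (max N1 K)
        have hnN1 : N1 ≤ n := le_trans (le_max_left _ _) hnN
        have hnK : K ≤ n := le_trans (le_max_right _ _) hnN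
        obtain ⟨k, hkp, hkres⟩ := mod_adjust m (n+1)
        have hstep : ε/4 ≤ G (x n) (x (m+k)) (x (m+k)) := by
          have h1 := gd_tri hG (x n) (x m) (x (m+k))
          have h2 := gd_swap hG (x (m+k)) (x m)
          have h3 := chain m k
          have h4 : (k:ℝ) * d m ≤ (p:ℝ) * d m := by
            have h5 : (k:ℝ) ≤ (p:ℝ) := by exact_mod_cast hkp.le
            nlinarith [hd0 m]
          have h5 := (hdsmall m (le_trans hnN1 hnm.le)).1
          linarith
        have hPex : ∃ m', n < m' ∧ m' % p = (n+1) % p ∧ ε/4 ≤ G (x n) (x m') (x m') :=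
          ⟨m + k, lt_of_lt_of_le hnm (Nat.le_add_right m k), hkres, hstep⟩
        obtain ⟨hM1, hM2, hM3⟩ := Nat.find_spec hPex
        have hMnp : n + p < Nat.find hPex := by
          by_contra hle
          push_neg at hle
          have hMeq : Nat.find hPex = n + 1 := by
            have hdvd : p ∣ Nat.find hPex - (n+1) :=
              (Nat.modEq_iff_dvd' (by omega)).mp hM2.symm
            have h6 : Nat.find hPex - (n+1) < p := by omega
            have := Nat.eq_zero_of_dvd_of_lt hdvd h6
            omega
          have h7 := (hdsmall n hnN1).2
          rw [hMeq] at hM3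
          have hdn : G (x n) (x (n+1)) (x (n+1)) = d n := rfl
          rw [hdn] at hM3
          linarith
        obtain ⟨M', hM'⟩ : ∃ M', Nat.find hPex = M' + p := ⟨Nat.find hPex - p, by omega⟩
        have hm''res : M' % p = (n+1) % p := by
          rw [← hM2, hM', Nat.add_mod_right]
        have hm''n : n < M' := by omega
        have hnotP := Nat.find_min hPex (show M' < Nat.find hPex by omega)
        have hm''small : G (x n) (x M') (x M') < ε/4 := by
          by_contra hge; push_neg at hge
          exact hnotP ⟨hm''n, hm''res, hge⟩
        have hub : G (x n) (x (Nat.find hPex)) (x (Nat.find hPex)) ≤ ε/4 + (p:ℝ) * d n := by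
          have h1 := gd_tri hG (x n) (x (Nat.find hPex)) (x M')
          have h2 : G (x M') (x (Nat.find hPex)) (x (Nat.find hPex)) ≤ (p:ℝ) * d M' := by
            have h3 := chain M' p
            rw [← hM'] at h3
            exact h3
          have h3 : d M' ≤ d n := hanti (le_of_lt hm''n)
          have h4 : (p:ℝ) * d M' ≤ (p:ℝ) * d n :=
            mul_le_mul_of_nonneg_left h3 (Nat.cast_nonneg p)
          linarith
        exact ⟨n, Nat.find hPex, hnK, hM1, hM3, hub, hM2⟩
      choose nk mk hk1 hk2 hk3 hk4 hk5 using step2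
      have hdk : Tendsto (fun k => d (nk k)) atTop (nhds 0) := by
        rw [tendsto_zero_iff (fun k => hd0 _)]
        intro δ hδ
        obtain ⟨N, hN⟩ := (tendsto_zero_iff hd0).mp hdtend δ hδ
        exact ⟨N, fun k hk => lt_of_le_of_lt (hanti (hk1 k)) (hN k hk)⟩
      have hdm : Tendsto (fun k => d (mk k)) atTop (nhds 0) := by
        rw [tendsto_zero_iff (fun k => hd0 _)]
        intro δ hδ
        obtain ⟨N, hN⟩ := (tendsto_zero_iff hd0).mp hdtend δ hδ
        exact ⟨N, fun k hk =>
          lt_of_le_of_lt (hanti (le_trans (hk1 k) (le_of_lt (hk2 k)))) (hN k hk)⟩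
      have hε4 : (0:ℝ) < ε/4 := by linarith
      have hAk : Tendsto (fun k => G (x (nk k)) (x (mk k)) (x (mk k))) atTop (nhds (ε/4)) := by
        refine tendsto_of_tendsto_of_tendsto_of_le_of_le
          (g := fun _ => ε/4) (h := fun k => ε/4 + (p:ℝ) * d (nk k))
          tendsto_const_nhds ?_ (fun k => hk3 k) (fun k => hk4 k)
        have h1 := tendsto_const_nhds (α := ℕ) (x := ε/4) |>.add (hdk.const_mul (p:ℝ))
        simpa using h1
      have hCk : Tendsto (fun k => G (x (nk k)) (x (mk k + 1)) (x (mk k + 1))) atTop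
          (nhds (ε/4)) := by
        refine tendsto_of_tendsto_of_tendsto_of_le_of_le
          (g := fun k => G (x (nk k)) (x (mk k)) (x (mk k)) - 2 * d (mk k))
          (h := fun k => G (x (nk k)) (x (mk k)) (x (mk k)) + d (mk k)) ?_ ?_ ?_ ?_
        · have h1 := hAk.sub (hdm.const_mul 2)
          simpa using h1
        · have h1 := hAk.add hdm
          simpa using h1
        · intro k
          have h1 := gd_tri hG (x (nk k)) (x (mk k)) (x (mk k + 1))
          have h2 := gd_swap hG (x (mk k + 1)) (x (mk k))
          have h3 : G (x (mk k)) (x (mk k + 1)) (x (mk k + 1)) = d (mk k) := rfl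
          simp only at h1 h2 ⊢
          linarith
        · intro k
          have h1 := gd_tri hG (x (nk k)) (x (mk k + 1)) (x (mk k))
          have h3 : G (x (mk k)) (x (mk k + 1)) (x (mk k + 1)) = d (mk k) := rfl
          simp only at h1 ⊢
          linarith
      have hBk : Tendsto (fun k => G (x (nk k + 1)) (x (mk k)) (x (mk k))) atTop
          (nhds (ε/4)) := by
        refine tendsto_of_tendsto_of_tendsto_of_le_of_le
          (g := fun k => G (x (nk k)) (x (mk k)) (x (mk k)) - d (nk k))
          (h := fun k => G (x (nk k)) (x (mk k)) (x (mk k)) + 2 * d (nk k)) ?_ ?_ ?_ ?_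
        · have h1 := hAk.sub hdk
          simpa using h1
        · have h1 := hAk.add (hdk.const_mul 2)
          simpa using h1
        · intro k
          have h1 := gd_tri hG (x (nk k)) (x (mk k)) (x (nk k + 1))
          have h3 : G (x (nk k)) (x (nk k + 1)) (x (nk k + 1)) = d (nk k) := rfl
          simp only at h1 ⊢
          linarith
        · intro k
          have h1 := gd_tri hG (x (nk k + 1)) (x (mk k)) (x (nk k))
          have h2 := gd_swap hG (x (nk k + 1)) (x (nk k))
          have h3 : G (x (nk k)) (x (nk k + 1)) (x (nk k + 1)) = d (nk k) := rfl
          simp only at h1 h2 ⊢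
          linarith
      have hLk : Tendsto (fun k => G (x (nk k + 1)) (x (mk k + 1)) (x (mk k + 1))) atTop
          (nhds (ε/4)) := by
        refine tendsto_of_tendsto_of_tendsto_of_le_of_le
          (g := fun k => G (x (nk k)) (x (mk k)) (x (mk k)) - d (nk k) - 2 * d (mk k))
          (h := fun k => G (x (nk k)) (x (mk k)) (x (mk k)) + 2 * d (nk k) + d (mk k)) ?_ ?_ ?_ ?_
        · have h1 := (hAk.sub hdk).sub (hdm.const_mul 2)
          simpa using h1
        · have h1 := (hAk.add (hdk.const_mul 2)).add hdm
          simpa using h1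
        · intro k
          have h1 := gd_tri hG (x (nk k)) (x (mk k)) (x (nk k + 1))
          have h2 := gd_tri hG (x (nk k + 1)) (x (mk k)) (x (mk k + 1))
          have h4 := gd_swap hG (x (mk k + 1)) (x (mk k))
          have h3 : G (x (nk k)) (x (nk k + 1)) (x (nk k + 1)) = d (nk k) := rfl
          have h5 : G (x (mk k)) (x (mk k + 1)) (x (mk k + 1)) = d (mk k) := rfl
          simp only at h1 h2 h4 ⊢
          linarith
        · intro k
          have h1 := gd_tri hG (x (nk k + 1)) (x (mk k + 1)) (x (nk k))
          have h2 := gd_swap hG (x (nk k + 1)) (x (nk k))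
          have h6 := gd_tri hG (x (nk k)) (x (mk k + 1)) (x (mk k))
          have h3 : G (x (nk k)) (x (nk k + 1)) (x (nk k + 1)) = d (nk k) := rfl
          have h5 : G (x (mk k)) (x (mk k + 1)) (x (mk k + 1)) = d (mk k) := rfl
          simp only at h1 h2 h6 ⊢
          linarith
      have hBrev : ∀ k, G (x (mk k)) (x (mk k)) (x (nk k + 1)) =
          G (x (nk k + 1)) (x (mk k)) (x (mk k)) := fun k => gd_rev hG _ _
      have hLφ : Tendsto (fun k => φ (G (x (nk k + 1)) (x (mk k + 1)) (x (mk k + 1)))) atTop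
          (nhds (φ (ε/4))) :=
        phi_tendsto hφ hε4.le hLk (Filter.Eventually.of_forall fun k => hG.nonneg _ _ _)
      have hargt : Tendsto (fun k => α * G (x (nk k)) (x (mk k + 1)) (x (mk k + 1)) +
          β * G (x (nk k + 1)) (x (mk k)) (x (mk k))) atTop (nhds ((α+β)*(ε/4))) := by
        have h1 := (hCk.const_mul α).add (hBk.const_mul β)
        have h2 : (α+β)*(ε/4) = α*(ε/4) + β*(ε/4) := by ring
        rw [h2]
        exact h1
      have hargpos : ∀ᶠ k in atTop, 0 ≤ α * G (x (nk k)) (x (mk k + 1)) (x (mk k + 1)) +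
          β * G (x (nk k + 1)) (x (mk k)) (x (mk k)) := by
        have hpos : 0 < (α+β)*(ε/4) := mul_pos hαβ0 hε4
        exact (hargt.eventually (lt_mem_nhds hpos)).mono fun k hk => hk.le
      have hargφ : Tendsto (fun k => φ (α * G (x (nk k)) (x (mk k + 1)) (x (mk k + 1)) +
          β * G (x (nk k + 1)) (x (mk k)) (x (mk k)))) atTop
          (nhds (φ ((α+β)*(ε/4)))) :=
        phi_tendsto hφ (mul_pos hαβ0 hε4).le hargt hargpos
      have hψk : Tendsto (fun k => ψ (G (x (nk k)) (x (mk k + 1)) (x (mk k + 1)))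
          (G (x (nk k + 1)) (x (mk k)) (x (mk k))) (G (x (nk k + 1)) (x (mk k)) (x (mk k))))
          atTop (nhds (ψ (ε/4) (ε/4) (ε/4))) :=
        psi_tendsto hψ hε4.le hε4.le hε4.le hCk hBk hBk
          (fun k => hG.nonneg _ _ _) (fun k => hG.nonneg _ _ _) (fun k => hG.nonneg _ _ _)
      have hfinal : φ (ε/4) ≤ φ ((α+β)*(ε/4)) - ψ (ε/4) (ε/4) (ε/4) := by
        refine le_of_tendsto_of_tendsto' hLφ (hargφ.sub hψk) fun k => ?_
        have h1 := key (nk k) (mk k) (hk5 k)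
        rw [hBrev k] at h1
        exact h1
      have hmono : φ ((α+β)*(ε/4)) ≤ φ (ε/4) :=
        hφ.mono (Set.mem_Ici.mpr (mul_nonneg hαβ0.le hε4.le)) (Set.mem_Ici.mpr hε4.le)
          (by nlinarith)
      have hψnn := hψ.nonneg (ε/4) (ε/4) (ε/4) hε4.le hε4.le hε4.le
      have hψz : ψ (ε/4) (ε/4) (ε/4) = 0 := le_antisymm (by linarith) hψnn
      have hfin := ((hψ.eq_zero_iff (ε/4) (ε/4) (ε/4) hε4.le hε4.le hε4.le).mp hψz).1
      linarith
    have hcauchy : GCauchySeq G x := by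
      intro ε hε
      obtain ⟨N, hN⟩ := pcauchy (ε/2) (by linarith)
      refine ⟨N, fun n hn m hm l hl => ?_⟩
      have h0 : G (x n) (x m) (x l) = G (x l) (x n) (x m) := (gcycle hG (x l) (x n) (x m)).symm
      have h1 := hG.rectangle (x l) (x n) (x m) (x m)
      have h2 : G (x m) (x n) (x m) = G (x n) (x m) (x m) := gcycle hG (x m) (x n) (x m)
      have h3 := hN l hl m hm
      have h4 := hN n hn m hm
      rw [h0]
      linarith
    obtain ⟨u, hu⟩ := hcompl x hcauchy
    have hun : Tendsto (fun n => G u (x n) (x n)) atTop (nhds 0) := by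
      rw [tendsto_zero_iff (fun n => hG.nonneg _ _ _)]
      intro δ hδ
      obtain ⟨N, hN⟩ := hu δ hδ
      exact ⟨N, fun n hn => hN n hn n hn⟩
    have huI : u ∈ ⋂ j, A j := by
      rw [Set.mem_iInter]
      intro j
      refine hcl j (fun k => x (j.val + k * p)) (fun k => ?_) u ?_
      · have hcast : ((j.val + k * p : ℕ) : Fin p) = j := by
          apply Fin.ext
          rw [Fin.val_natCast _ p, Nat.add_mul_mod_self_right, Nat.mod_eq_of_lt j.isLt]
        have h1 := hmem (j.val + k * p)
        rwa [hcast] at h1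
      · intro ε hε
        obtain ⟨N, hN⟩ := hu ε hε
        refine ⟨N, fun a ha b hb => ?_⟩
        have ha2 : a ≤ a * p := Nat.le_mul_of_pos_right a hp
        have hb2 : b ≤ b * p := Nat.le_mul_of_pos_right b hp
        exact hN _ (by omega) _ (by omega)
    have ht0 : 0 ≤ G u (T u) (T u) := hG.nonneg _ _ _
    have keyu : ∀ n, φ (G (x (n+1)) (T u) (T u)) ≤
        φ (α * G (x n) (T u) (T u) + β * G u u (x (n+1))) -
          ψ (G (x n) (T u) (T u)) (G u u (x (n+1))) (G u u (x (n+1))) := by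
      intro n
      have hu1 : u ∈ A ((n : Fin p) + 1) := Set.mem_iInter.mp huI _
      have h1 := hcontr (n : Fin p) (x n) (hmem n) u hu1 u hu1
      rw [← hxs n] at h1
      exact h1
    have hPt : Tendsto (fun n => G (x n) (T u) (T u)) atTop (nhds (G u (T u) (T u))) := by
      refine tendsto_of_tendsto_of_tendsto_of_le_of_le
        (g := fun n => G u (T u) (T u) - G u (x n) (x n))
        (h := fun n => G u (T u) (T u) + 2 * G u (x n) (x n)) ?_ ?_ ?_ ?_
      · have h1 := tendsto_const_nhds (α := ℕ) (x := G u (T u) (T u)) |>.sub hun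
        simpa using h1
      · have h1 := tendsto_const_nhds (α := ℕ) (x := G u (T u) (T u)) |>.add (hun.const_mul 2)
        simpa using h1
      · intro n
        have h1 := gd_tri hG u (T u) (x n)
        simp only
        linarith
      · intro n
        have h1 := gd_tri hG (x n) (T u) u
        have h2 := gd_swap hG (x n) u
        simp only
        linarith
    have hPt1 : Tendsto (fun n => G (x (n+1)) (T u) (T u)) atTop (nhds (G u (T u) (T u))) :=
      hPt.comp (tendsto_add_atTop_nat 1)
    have hQ0 : ∀ n, (0:ℝ) ≤ G u u (x (n+1)) := fun n => hG.nonneg _ _ _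
    have hQt : Tendsto (fun n => G u u (x (n+1))) atTop (nhds 0) := by
      refine tendsto_of_tendsto_of_tendsto_of_le_of_le
        (g := fun _ => (0:ℝ)) (h := fun n => 2 * G u (x (n+1)) (x (n+1)))
        tendsto_const_nhds ?_ hQ0 ?_
      · have h1 := (hun.comp (tendsto_add_atTop_nat 1)).const_mul 2
        simpa using h1
      · intro n
        have h1 : G u u (x (n+1)) = G (x (n+1)) u u := gd_rev hG u (x (n+1))
        have h2 := gd_swap hG (x (n+1)) u
        simp only
        linarith
    have hTu : T u = u := by
      by_contra hne'
      have htpos : 0 < G u (T u) (T u) := by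
        rcases lt_or_eq_of_le ht0 with h | h
        · exact h
        · exact absurd (gd_eq hG h.symm).symm hne'
      have hargt : Tendsto (fun n => α * G (x n) (T u) (T u) + β * G u u (x (n+1))) atTop
          (nhds (α * G u (T u) (T u))) := by
        have h1 := (hPt.const_mul α).add (hQt.const_mul β)
        simpa using h1
      have hargnn : ∀ᶠ n in atTop, 0 ≤ α * G (x n) (T u) (T u) + β * G u u (x (n+1)) := by
        rcases eq_or_lt_of_le hα0 with hazero | hapos
        · have hβ : 0 < β := by
            rw [← hazero] at hαβ0; simpa using hαβ0
          refine Filter.Eventually.of_forall fun n => ?_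
          have h1 := hQ0 n
          have h2 := hG.nonneg (x n) (T u) (T u)
          nlinarith
        · have hpos : 0 < α * G u (T u) (T u) := mul_pos hapos htpos
          exact (hargt.eventually (lt_mem_nhds hpos)).mono fun n hn => hn.le
      have hLφ : Tendsto (fun n => φ (G (x (n+1)) (T u) (T u))) atTop
          (nhds (φ (G u (T u) (T u)))) :=
        phi_tendsto hφ ht0 hPt1 (Filter.Eventually.of_forall fun n => hG.nonneg _ _ _)
      have hargφ : Tendsto (fun n => φ (α * G (x n) (T u) (T u) + β * G u u (x (n+1)))) atTop
          (nhds (φ (α * G u (T u) (T u)))) :=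
        phi_tendsto hφ (mul_nonneg hα0 ht0) hargt hargnn
      have hψt : Tendsto (fun n => ψ (G (x n) (T u) (T u)) (G u u (x (n+1))) (G u u (x (n+1))))
          atTop (nhds (ψ (G u (T u) (T u)) 0 0)) :=
        psi_tendsto hψ ht0 le_rfl le_rfl hPt hQt hQt
          (fun n => hG.nonneg _ _ _) hQ0 hQ0
      have hfin : φ (G u (T u) (T u)) ≤ φ (α * G u (T u) (T u)) - ψ (G u (T u) (T u)) 0 0 :=
        le_of_tendsto_of_tendsto' hLφ (hargφ.sub hψt) fun n => keyu n
      have hmono2 : φ (α * G u (T u) (T u)) ≤ φ (G u (T u) (T u)) :=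
        hφ.mono (Set.mem_Ici.mpr (mul_nonneg hα0 ht0)) (Set.mem_Ici.mpr ht0) (by nlinarith)
      have hψnn2 := hψ.nonneg (G u (T u) (T u)) 0 0 ht0 le_rfl le_rfl
      have hψz2 : ψ (G u (T u) (T u)) 0 0 = 0 := le_antisymm (by linarith) hψnn2
      have ht' : G u (T u) (T u) = 0 :=
        ((hψ.eq_zero_iff _ 0 0 ht0 le_rfl le_rfl).mp hψz2).1
      linarith
    exact ⟨u, hTu, huI⟩
  obtain ⟨u, huT, huI⟩ := keyexists
  refine ⟨u, huI, huT, ?_⟩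
  intro v hv hvT
  simp only [Set.mem_iUnion] at hv
  obtain ⟨i, hvA⟩ := hv
  have hvA' : v ∈ A (i + 1) := by rw [← hvT]; exact hcyc i v hvA
  have h := hcontr i u (Set.mem_iInter.mp huI i) v hvA' v hvA'
  rw [huT, hvT] at h
  have hrev : G v v u = G u v v := gd_rev hG v u
  rw [hrev] at h
  set s := G u v v with hs
  have hs0 : 0 ≤ s := hG.nonneg u v v
  have hsum : α * s + β * s = (α + β) * s := by ring
  rw [hsum] at h
  have hles : (α + β) * s ≤ s := by nlinarith
  have hmono : φ ((α + β) * s) ≤ φ s :=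
    hφ.mono (Set.mem_Ici.mpr (mul_nonneg hαβ0.le hs0)) (Set.mem_Ici.mpr hs0) hles
  have hψnn : 0 ≤ ψ s s s := hψ.nonneg s s s hs0 hs0 hs0
  have hψ0 : ψ s s s = 0 := le_antisymm (by linarith) hψnn
  have hs' : s = 0 := ((hψ.eq_zero_iff s s s hs0 hs0 hs0).mp hψ0).1
  have hGuv : G u v v = 0 := by rw [← hs]; exact hs'
  exact (gd_eq hG hGuv).symm
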